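/- Let M, N be n×n symmetric real matrices. The following are equivalent: (i) for every x ∈ ℝ^n, ⟨x, M x⟩ ≥ 0 or ⟨x, N x⟩ ≥ 0; (ii) there exists t ∈ [0,1] such that the matrix (1−t)M + tN is positive semidefinite. -/
import Mathlib

open Matrix Set

lemma bil_symm {n : ℕ} (A : Matrix (Fin n) (Fin n) ℝ) (hA : Aᵀ = A) (x y : Fin n → ℝ) :
    y ⬝ᵥ A *ᵥ x = x ⬝ᵥ A *ᵥ y := by
  rw [Matrix.dotProduct_mulVec]
  conv_lhs => rw [← hA]
  rw [Matrix.vecMul_transpose, dotProduct_comm]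

lemma quad_expand {n : ℕ} (A : Matrix (Fin n) (Fin n) ℝ) (hA : Aᵀ = A) (a b : ℝ)
    (x y : Fin n → ℝ) :
    (a • x + b • y) ⬝ᵥ A *ᵥ (a • x + b • y) =
      a^2 * (x ⬝ᵥ A *ᵥ x) + 2*a*b * (x ⬝ᵥ A *ᵥ y) + b^2 * (y ⬝ᵥ A *ᵥ y) := by
  simp only [Matrix.mulVec_add, Matrix.mulVec_smul, dotProduct_add,
    add_dotProduct, dotProduct_smul, smul_dotProduct, smul_eq_mul,
    bil_symm A hA x y]
  ring

lemma q_comb {n : ℕ} (M N : Matrix (Fin n) (Fin n) ℝ) (t : ℝ) (x : Fin n → ℝ) :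
    x ⬝ᵥ ((1 - t) • M + t • N) *ᵥ x = (1 - t) * (x ⬝ᵥ M *ᵥ x) + t * (x ⬝ᵥ N *ᵥ x) := by
  simp [Matrix.add_mulVec, Matrix.smul_mulVec, dotProduct_add,
    dotProduct_smul, smul_eq_mul]

lemma icc_two_opens {U V : Set ℝ} (hU : IsOpen U) (hV : IsOpen V)
    (hcov : Set.Icc (0:ℝ) 1 ⊆ U ∪ V) (h0 : (0:ℝ) ∈ U) (h1 : (1:ℝ) ∈ V)
    (hdisj : ∀ t ∈ Set.Icc (0:ℝ) 1, t ∈ U → t ∈ V → False) : False := by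
  obtain ⟨t, ht⟩ := isPreconnected_Icc (a := (0:ℝ)) (b := 1) U V hU hV hcov
    ⟨0, ⟨le_refl 0, zero_le_one⟩, h0⟩ ⟨1, ⟨zero_le_one, le_refl 1⟩, h1⟩
  exact hdisj t ht.1 ht.2.1 ht.2.2

lemma inner_contra {n : ℕ} (M N : Matrix (Fin n) (Fin n) ℝ)
    (hMs : Mᵀ = M) (hNs : Nᵀ = N)
    (h : ∀ x : Fin n → ℝ, 0 ≤ x ⬝ᵥ M *ᵥ x ∨ 0 ≤ x ⬝ᵥ N *ᵥ x)
    (t : ℝ) (ht : t ∈ Set.Icc (0:ℝ) 1) (x y : Fin n → ℝ)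
    (hxA : x ⬝ᵥ ((1 - t) • M + t • N) *ᵥ x < 0)
    (hyA : y ⬝ᵥ ((1 - t) • M + t • N) *ᵥ y < 0)
    (hxM : x ⬝ᵥ M *ᵥ x < 0) (hyN : y ⬝ᵥ N *ᵥ y < 0)
    (hb : x ⬝ᵥ ((1 - t) • M + t • N) *ᵥ y ≤ 0) : False := by
  set A := (1 - t) • M + t • N with hAdef
  have hAs : Aᵀ = A := by
    rw [hAdef, Matrix.transpose_add, Matrix.transpose_smul, Matrix.transpose_smul, hMs, hNs]
  set z : ℝ → (Fin n → ℝ) := fun s => (1 - s) • x + s • y with hz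
  -- the quadratic form of A is negative along the whole path
  have hzA : ∀ s ∈ Set.Icc (0:ℝ) 1, (z s) ⬝ᵥ A *ᵥ (z s) < 0 := by
    intro s hs
    rw [hz, quad_expand A hAs]
    rcases hs with ⟨hs0, hs1⟩
    have h3 : 2*(1-s)*s * (x ⬝ᵥ A *ᵥ y) ≤ 0 :=
      mul_nonpos_of_nonneg_of_nonpos (by nlinarith) hb
    have h2 : s^2 * (y ⬝ᵥ A *ᵥ y) ≤ 0 :=
      mul_nonpos_of_nonneg_of_nonpos (sq_nonneg s) hyA.le
    rcases eq_or_lt_of_le hs1 with rfl | hs1'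
    · norm_num
      linarith [hyA]
    · have hpos : (0:ℝ) < (1-s)^2 := pow_pos (by linarith) 2
      have h1 : (1-s)^2 * (x ⬝ᵥ A *ᵥ x) < 0 := mul_neg_of_pos_of_neg hpos hxA
      linarith
  -- hence at every point of the path, M or N is negative
  have hcov : ∀ s ∈ Set.Icc (0:ℝ) 1,
      (z s) ⬝ᵥ M *ᵥ (z s) < 0 ∨ (z s) ⬝ᵥ N *ᵥ (z s) < 0 := by
    intro s hs
    have := hzA s hs
    rw [q_comb] at this
    rcases ht with ⟨ht0, ht1⟩
    by_contra hcon
    push_neg at hcon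
    nlinarith [hcon.1, hcon.2]
  have hMopen : IsOpen {s : ℝ | (z s) ⬝ᵥ M *ᵥ (z s) < 0} := by
    have : {s : ℝ | (z s) ⬝ᵥ M *ᵥ (z s) < 0} =
        (fun s : ℝ => (1-s)^2 * (x ⬝ᵥ M *ᵥ x) + 2*(1-s)*s * (x ⬝ᵥ M *ᵥ y)
          + s^2 * (y ⬝ᵥ M *ᵥ y)) ⁻¹' (Set.Iio 0) := by
      ext s
      simp only [Set.mem_setOf_eq, Set.mem_preimage, Set.mem_Iio, hz,
        quad_expand M hMs]
    rw [this]
    exact (by fun_prop : Continuous _).isOpen_preimage _ isOpen_Iio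
  have hNopen : IsOpen {s : ℝ | (z s) ⬝ᵥ N *ᵥ (z s) < 0} := by
    have : {s : ℝ | (z s) ⬝ᵥ N *ᵥ (z s) < 0} =
        (fun s : ℝ => (1-s)^2 * (x ⬝ᵥ N *ᵥ x) + 2*(1-s)*s * (x ⬝ᵥ N *ᵥ y)
          + s^2 * (y ⬝ᵥ N *ᵥ y)) ⁻¹' (Set.Iio 0) := by
      ext s
      simp only [Set.mem_setOf_eq, Set.mem_preimage, Set.mem_Iio, hz,
        quad_expand N hNs]
    rw [this]
    exact (by fun_prop : Continuous _).isOpen_preimage _ isOpen_Iio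
  have hz0 : z 0 = x := by simp [hz]
  have hz1 : z 1 = y := by simp [hz]
  exact icc_two_opens hMopen hNopen (fun s hs => hcov s hs)
    (by simp only [Set.mem_setOf_eq, hz0]; exact hxM)
    (by simp only [Set.mem_setOf_eq, hz1]; exact hyN)
    (fun s _ hsM hsN => by
      rcases h (z s) with h' | h' <;> simp only [Set.mem_setOf_eq] at hsM hsN <;> linarith)

/-- **The S-lemma, reformulated.** For real symmetric `M, N`: every `x` satisfies
`⟨x, M x⟩ ≥ 0` or `⟨x, N x⟩ ≥ 0` iff some convex combination `(1-t)M + tN` is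
positive semidefinite. -/
theorem s_lemma_reformulated {n : ℕ} (M N : Matrix (Fin n) (Fin n) ℝ)
    (hM : M.IsSymm) (hN : N.IsSymm) :
    (∀ x : Fin n → ℝ, 0 ≤ x ⬝ᵥ M.mulVec x ∨ 0 ≤ x ⬝ᵥ N.mulVec x) ↔
      ∃ t : ℝ, t ∈ Set.Icc (0 : ℝ) 1 ∧
        ∀ x : Fin n → ℝ, 0 ≤ x ⬝ᵥ ((1 - t) • M + t • N).mulVec x := by
  have hMs : Mᵀ = M := hM
  have hNs : Nᵀ = N := hN
  constructor
  · intro h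
    by_contra hcon
    push_neg at hcon
    have hneg : ∀ t ∈ Set.Icc (0:ℝ) 1, ∃ x : Fin n → ℝ,
        x ⬝ᵥ ((1 - t) • M + t • N) *ᵥ x < 0 := by
      intro t ht
      obtain ⟨x, hx⟩ := hcon t ht
      exact ⟨x, by linarith⟩
    set U : Set ℝ := {t | ∃ x : Fin n → ℝ,
      x ⬝ᵥ M *ᵥ x < 0 ∧ x ⬝ᵥ ((1 - t) • M + t • N) *ᵥ x < 0} with hU
    set V : Set ℝ := {t | ∃ x : Fin n → ℝ,
      x ⬝ᵥ N *ᵥ x < 0 ∧ x ⬝ᵥ ((1 - t) • M + t • N) *ᵥ x < 0} with hV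
    have hUopen : IsOpen U := by
      have : U = ⋃ x : Fin n → ℝ, {t : ℝ | x ⬝ᵥ M *ᵥ x < 0 ∧
          (1 - t) * (x ⬝ᵥ M *ᵥ x) + t * (x ⬝ᵥ N *ᵥ x) < 0} := by
        ext t
        simp only [hU, Set.mem_setOf_eq, Set.mem_iUnion, q_comb]
      rw [this]
      apply isOpen_iUnion
      intro x
      by_cases hx : x ⬝ᵥ M *ᵥ x < 0
      · have he : {t : ℝ | x ⬝ᵥ M *ᵥ x < 0 ∧
            (1 - t) * (x ⬝ᵥ M *ᵥ x) + t * (x ⬝ᵥ N *ᵥ x) < 0} =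
            (fun t : ℝ => (1 - t) * (x ⬝ᵥ M *ᵥ x) + t * (x ⬝ᵥ N *ᵥ x)) ⁻¹' Set.Iio 0 := by
          ext t; simp [hx]
        rw [he]
        exact (by fun_prop : Continuous _).isOpen_preimage _ isOpen_Iio
      · have he : {t : ℝ | x ⬝ᵥ M *ᵥ x < 0 ∧
            (1 - t) * (x ⬝ᵥ M *ᵥ x) + t * (x ⬝ᵥ N *ᵥ x) < 0} = ∅ := by
          ext t; simp [hx]
        rw [he]; exact isOpen_empty
    have hVopen : IsOpen V := by
      have : V = ⋃ x : Fin n → ℝ, {t : ℝ | x ⬝ᵥ N *ᵥ x < 0 ∧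
          (1 - t) * (x ⬝ᵥ M *ᵥ x) + t * (x ⬝ᵥ N *ᵥ x) < 0} := by
        ext t
        simp only [hV, Set.mem_setOf_eq, Set.mem_iUnion, q_comb]
      rw [this]
      apply isOpen_iUnion
      intro x
      by_cases hx : x ⬝ᵥ N *ᵥ x < 0
      · have he : {t : ℝ | x ⬝ᵥ N *ᵥ x < 0 ∧
            (1 - t) * (x ⬝ᵥ M *ᵥ x) + t * (x ⬝ᵥ N *ᵥ x) < 0} =
            (fun t : ℝ => (1 - t) * (x ⬝ᵥ M *ᵥ x) + t * (x ⬝ᵥ N *ᵥ x)) ⁻¹' Set.Iio 0 := by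
          ext t; simp [hx]
        rw [he]
        exact (by fun_prop : Continuous _).isOpen_preimage _ isOpen_Iio
      · have he : {t : ℝ | x ⬝ᵥ N *ᵥ x < 0 ∧
            (1 - t) * (x ⬝ᵥ M *ᵥ x) + t * (x ⬝ᵥ N *ᵥ x) < 0} = ∅ := by
          ext t; simp [hx]
        rw [he]; exact isOpen_empty
    have hcov : Set.Icc (0:ℝ) 1 ⊆ U ∪ V := by
      intro t ht
      obtain ⟨x, hx⟩ := hneg t ht
      have hx' := hx
      rw [q_comb] at hx'
      rcases ht with ⟨ht0, ht1⟩
      by_cases hxM : x ⬝ᵥ M *ᵥ x < 0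
      · exact Or.inl ⟨x, hxM, hx⟩
      · have hxN : x ⬝ᵥ N *ᵥ x < 0 := by
          push_neg at hxM
          nlinarith
        exact Or.inr ⟨x, hxN, hx⟩
    have h0U : (0:ℝ) ∈ U := by
      obtain ⟨x, hx⟩ := hneg 0 ⟨le_refl 0, zero_le_one⟩
      have hx' := hx
      rw [q_comb] at hx'
      exact ⟨x, by linarith, hx⟩
    have h1V : (1:ℝ) ∈ V := by
      obtain ⟨x, hx⟩ := hneg 1 ⟨zero_le_one, le_refl 1⟩
      have hx' := hx
      rw [q_comb] at hx'
      exact ⟨x, by linarith, hx⟩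
    refine icc_two_opens hUopen hVopen hcov h0U h1V ?_
    intro t ht htU htV
    obtain ⟨x, hxM, hxA⟩ := htU
    obtain ⟨y, hyN, hyA⟩ := htV
    rcases le_or_gt (x ⬝ᵥ ((1 - t) • M + t • N) *ᵥ y) 0 with hb | hb
    · exact inner_contra M N hMs hNs h t ht x y hxA hyA hxM hyN hb
    · refine inner_contra M N hMs hNs h t ht (-x) y ?_ hyA ?_ hyN ?_
      · simpa [Matrix.mulVec_neg, dotProduct_neg, neg_dotProduct] using hxA
      · simpa [Matrix.mulVec_neg, dotProduct_neg, neg_dotProduct] using hxM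
      · simp only [neg_dotProduct]
        linarith
  · rintro ⟨t, ⟨ht0, ht1⟩, hpsd⟩ x
    have hx := hpsd x
    rw [q_comb] at hx
    by_contra hcon
    push_neg at hcon
    obtain ⟨h1, h2⟩ := hcon
    nlinarith [mul_nonpos_of_nonneg_of_nonpos (by linarith : (0:ℝ) ≤ 1 - t) h1.le,
      mul_nonpos_of_nonneg_of_nonpos ht0 h2.le,
      mul_neg_of_pos_of_neg (lt_of_le_of_ne ht0 (by rintro rfl; simp at hx; linarith)) h2]
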